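/- Let N = 2M+1 with M ≥ 1. For each 1 ≤ m ≤ M-1 there exists, up to nonzero scalar multiple, a unique even vector a ∈ ℝ^N with signal length 2m+1 such that the signal length of its centered DFT equals N+1-(2m+1) = 2M-2m+1. -/

import Mathlib

open scoped Real BigOperators

/-- The index set `I_N = {-M+1, ..., -M+N}` with `M = ⌊(N+1)/2⌋`. -/
noncomputable def Iset (N : ℕ) : Finset ℤ :=
  Finset.Icc (1 - (((N + 1) / 2 : ℕ) : ℤ)) ((N : ℤ) - (((N + 1) / 2 : ℕ) : ℤ))

/-- The centered discrete Fourier transform. -/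
noncomputable def dft (N : ℕ) (u : ℤ → ℂ) (l : ℤ) : ℂ :=
  (Real.sqrt N : ℂ)⁻¹ *
    ∑ k ∈ Iset N, Complex.exp (-2 * Real.pi * Complex.I * k * l / N) * u k

open Classical in
/-- The support of a vector: indices in `I_N` where it is nonzero. -/
noncomputable def supp (N : ℕ) (u : ℤ → ℂ) : Finset ℤ :=
  (Iset N).filter (fun k => u k ≠ 0)

/-- The signal length `L(b) = max{i - j : i, j ∈ supp b} + 1`. -/
noncomputable def len (N : ℕ) (u : ℤ → ℂ) : ℕ :=
  ((supp N u ×ˢ supp N u).sup fun p => (p.1 - p.2).toNat) + 1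

/-- A vector is even if `a(-k) = a(k)` for all `k ∈ I_N` (here `N` odd, `I_N = {-M,…,M}`). -/
def IsEvenVec (N : ℕ) (a : ℤ → ℝ) : Prop := ∀ k ∈ Iset N, a (-k) = a k

/-!
Write `ω = e^{-2πi/N}`. For `u` supported in `[-m, m]`, the DFT at `l` is, up to the nonzero
factor `N^{-1/2} ω^{-ml}`, the value at `ω^l` of the polynomial `∑_{|k| ≤ m} u(k) X^{k+m}` of
degree `≤ 2m`. An even vector of signal length `≤ 2r + 1` is supported in `[-r, r]`, and the DFT
of an even vector is even. So for even `a` the two length conditions say that this polynomial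
vanishes at the `2m` distinct points `ω^l`, `M - m < |l| ≤ M`, which determines it up to a scalar
as `∏ (X - ω^l)`. Pairing `ω^j` with `ω^{-j}` writes this product over the reals with palindromic
factors `X² - 2 cos(2πj/N) X + 1`, so its coefficient vector is real and even, and since it has
no other roots among the `ω^l`, the DFT of that vector is nonzero at `±(M - m)`.
-/

open Polynomial Finset

theorem mem_Iset_two_mul_add_one {M : ℕ} {k : ℤ} : k ∈ Iset (2 * M + 1) ↔ |k| ≤ M := by
  have h : ((2 * M + 1 + 1) / 2 : ℕ) = M + 1 := by omega
  rw [Iset, h, mem_Icc, abs_le]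
  push_cast
  omega

theorem neg_mem_Iset_two_mul_add_one {M : ℕ} {k : ℤ} (hk : k ∈ Iset (2 * M + 1)) :
    -k ∈ Iset (2 * M + 1) := by
  rwa [mem_Iset_two_mul_add_one, abs_neg, ← mem_Iset_two_mul_add_one]

section SignalLength

variable {N : ℕ} {u : ℤ → ℂ}

theorem mem_supp {k : ℤ} : k ∈ supp N u ↔ k ∈ Iset N ∧ u k ≠ 0 := by
  rw [supp, mem_filter]

theorem sub_lt_len {i j : ℤ} (hi : i ∈ supp N u) (hj : j ∈ supp N u) : i - j < len N u := by
  have := le_sup (f := fun p : ℤ × ℤ => (p.1 - p.2).toNat) (mem_product (p := (i, j)) |>.2 ⟨hi, hj⟩)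
  rw [len]
  omega

theorem len_le_of_vanishing {r : ℕ} (hu : ∀ k ∈ Iset N, (r : ℤ) < |k| → u k = 0) :
    len N u ≤ 2 * r + 1 := by
  have habs : ∀ k ∈ supp N u, |k| ≤ r := fun k hk =>
    not_lt.1 fun hr => (mem_supp.1 hk).2 (hu k (mem_supp.1 hk).1 hr)
  refine Nat.succ_le_succ (Finset.sup_le fun p hp => ?_)
  obtain ⟨hi, hj⟩ := mem_product.1 hp
  have := abs_le.1 (habs _ hi)
  have := abs_le.1 (habs _ hj)
  omega

theorem len_eq_of_vanishing {r : ℕ} (hu : ∀ k ∈ Iset N, (r : ℤ) < |k| → u k = 0)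
    (hr : (r : ℤ) ∈ supp N u) (hr' : -(r : ℤ) ∈ supp N u) : len N u = 2 * r + 1 := by
  have := sub_lt_len hr hr'
  have := len_le_of_vanishing hu
  omega

theorem vanishing_of_len_le {M r : ℕ} (heven : ∀ k ∈ Iset (2 * M + 1), u (-k) = u k)
    (hlen : len (2 * M + 1) u ≤ 2 * r + 1) :
    ∀ k ∈ Iset (2 * M + 1), (r : ℤ) < |k| → u k = 0 := by
  intro k hk hrk
  by_contra hne
  have hneg := neg_mem_Iset_two_mul_add_one hk
  have h₁ := sub_lt_len (mem_supp.2 ⟨hk, hne⟩) (mem_supp.2 ⟨hneg, by rwa [heven k hk]⟩)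
  have h₂ := sub_lt_len (mem_supp.2 ⟨hneg, by rwa [heven k hk]⟩) (mem_supp.2 ⟨hk, hne⟩)
  cases abs_cases k <;> omega

end SignalLength

section Fourier

variable {M : ℕ}

noncomputable def dftRoot (M : ℕ) : ℂ :=
  Complex.exp (-(2 * π * Complex.I / (2 * M + 1 : ℕ)))

theorem isPrimitiveRoot_dftRoot (M : ℕ) : IsPrimitiveRoot (dftRoot M) (2 * M + 1) := by
  simpa only [dftRoot, Complex.exp_neg] using (Complex.isPrimitiveRoot_exp _ (by omega)).inv

theorem dftRoot_ne_zero (M : ℕ) : dftRoot M ≠ 0 := Complex.exp_ne_zero _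

theorem exp_eq_dftRoot_zpow_zpow (k l : ℤ) :
    Complex.exp (-2 * π * Complex.I * k * l / (2 * M + 1 : ℕ)) = (dftRoot M ^ l) ^ k := by
  rw [dftRoot, ← zpow_mul, ← Complex.exp_int_mul]
  push_cast
  ring_nf

theorem dftRoot_zpow_injective {l l' : ℤ} (hl : |l| ≤ M) (hl' : |l'| ≤ M)
    (h : dftRoot M ^ l = dftRoot M ^ l') : l = l' := by
  have hdvd : ((2 * M + 1 : ℕ) : ℤ) ∣ l - l' :=
    ((isPrimitiveRoot_dftRoot M).zpow_eq_one_iff_dvd _).1 (by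
      rw [zpow_sub₀ (dftRoot_ne_zero M), h, div_self (zpow_ne_zero _ (dftRoot_ne_zero M))])
  have hlt : |l - l'| < ((2 * M + 1 : ℕ) : ℤ) := (abs_sub _ _).trans_lt (by push_cast; omega)
  exact sub_eq_zero.1 (Int.eq_zero_of_abs_lt_dvd hdvd hlt)

noncomputable def centeredPoly (m : ℕ) (u : ℤ → ℂ) : ℂ[X] :=
  ∑ k ∈ Icc (-(m : ℤ)) m, monomial (k + m).toNat (u k)

theorem natDegree_centeredPoly_le (m : ℕ) (u : ℤ → ℂ) : (centeredPoly m u).natDegree ≤ 2 * m :=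
  natDegree_sum_le_of_forall_le _ _ fun k hk =>
    (natDegree_monomial_le _).trans (by rw [mem_Icc] at hk; omega)

theorem coeff_centeredPoly {m : ℕ} (u : ℤ → ℂ) {k : ℤ} (hk : |k| ≤ m) :
    (centeredPoly m u).coeff (k + m).toNat = u k := by
  have hk' := abs_le.1 hk
  rw [centeredPoly, finsetSum_coeff, sum_eq_single_of_mem k (mem_Icc.2 hk')]
  · rw [coeff_monomial, if_pos rfl]
  · intro k' hk' hne
    rw [coeff_monomial, if_neg]
    rw [mem_Icc] at hk'
    omega

theorem eval_centeredPoly (m : ℕ) (u : ℤ → ℂ) {x : ℂ} (hx : x ≠ 0) :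
    (centeredPoly m u).eval x = x ^ (m : ℤ) * ∑ k ∈ Icc (-(m : ℤ)) m, x ^ k * u k := by
  rw [centeredPoly, eval_finsetSum, mul_sum]
  refine sum_congr rfl fun k hk => ?_
  rw [eval_monomial, ← mul_assoc, ← zpow_add₀ hx, ← zpow_natCast, mul_comm]
  congr 2
  rw [mem_Icc] at hk
  omega

theorem dft_eq_sum_Icc {m : ℕ} (hm : m ≤ M) {u : ℤ → ℂ}
    (hu : ∀ k ∈ Iset (2 * M + 1), (m : ℤ) < |k| → u k = 0) (l : ℤ) :
    dft (2 * M + 1) u l =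
      (√(2 * M + 1 : ℕ) : ℂ)⁻¹ * ∑ k ∈ Icc (-(m : ℤ)) m, (dftRoot M ^ l) ^ k * u k := by
  rw [dft]
  congr 1
  refine (sum_subset (fun k hk => ?_) fun k hk hk' => ?_).symm.trans
    (sum_congr rfl fun k _ => by rw [exp_eq_dftRoot_zpow_zpow])
  · rw [mem_Icc] at hk
    rw [mem_Iset_two_mul_add_one, abs_le]
    omega
  · rw [hu k hk (by rw [mem_Icc] at hk'; cases abs_cases k <;> omega), mul_zero]

theorem dft_eq_zero_iff_eval_centeredPoly {m : ℕ} (hm : m ≤ M) {u : ℤ → ℂ}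
    (hu : ∀ k ∈ Iset (2 * M + 1), (m : ℤ) < |k| → u k = 0) (l : ℤ) :
    dft (2 * M + 1) u l = 0 ↔ (centeredPoly m u).eval (dftRoot M ^ l) = 0 := by
  have hx : dftRoot M ^ l ≠ 0 := zpow_ne_zero _ (dftRoot_ne_zero M)
  have hN : (√(2 * M + 1 : ℕ) : ℂ) ≠ 0 := Complex.ofReal_ne_zero.2 (by positivity)
  rw [dft_eq_sum_Icc hm hu, eval_centeredPoly m u hx, mul_eq_zero, mul_eq_zero]
  simp only [inv_eq_zero, hN, zpow_ne_zero _ hx, false_or]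

theorem dft_neg_of_even {u : ℤ → ℂ} (heven : ∀ k ∈ Iset (2 * M + 1), u (-k) = u k) (l : ℤ) :
    dft (2 * M + 1) u (-l) = dft (2 * M + 1) u l := by
  rw [dft, dft]
  congr 1
  refine sum_nbij' Neg.neg Neg.neg (fun k hk => neg_mem_Iset_two_mul_add_one hk)
    (fun k hk => neg_mem_Iset_two_mul_add_one hk) (fun k _ => neg_neg k) (fun k _ => neg_neg k)
    fun k hk => ?_
  rw [heven k hk]
  congr 2
  push_cast
  ring

end Fourier

namespace Polynomial

variable {R : Type*}

theorem reverse_X_sq_sub_C_mul_X_add_one [CommRing R] [Nontrivial R] (t : R) :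
    (X ^ 2 - C t * X + 1 : R[X]).reverse = X ^ 2 - C t * X + 1 := by
  have hdeg : (X ^ 2 - C t * X : R[X]).natDegree = 2 := by compute_degree!
  rw [← C_1, reverse_add_C, hdeg,
    show (X ^ 2 - C t * X : R[X]) = (X * 1 + C (-t)) * X by rw [C_neg]; ring,
    reverse_mul_X, reverse_add_C, reverse_X_mul, ← C_1, reverse_C]
  simp only [map_one, map_neg, mul_one, natDegree_X, pow_one, neg_mul, one_mul]
  ring

theorem reverse_prod_of_reverse_eq [CommSemiring R] [NoZeroDivisors R] {ι : Type*}
    (s : Finset ι) {f : ι → R[X]} (hf : ∀ i ∈ s, (f i).reverse = f i) :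
    (∏ i ∈ s, f i).reverse = ∏ i ∈ s, f i := by
  classical
  induction s using Finset.induction_on with
  | empty => simpa using reverse_C (1 : R)
  | insert a s ha ih =>
    rw [prod_insert ha, reverse_mul_of_domain, hf a (mem_insert_self a s),
      ih fun i hi => hf i (mem_insert_of_mem hi)]

theorem coeff_eq_coeff_natDegree_sub_of_reverse_eq [Semiring R] {p : R[X]} (hp : p.reverse = p)
    {j : ℕ} (hj : j ≤ p.natDegree) : p.coeff j = p.coeff (p.natDegree - j) := by
  conv_lhs => rw [← hp]
  rw [coeff_reverse, revAt_le hj]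

theorem eq_C_mul_of_eval_eq_zero [CommRing R] [IsDomain R] {p q : R[X]} {s : Finset R}
    (hq : q.Monic) (hqdeg : q.natDegree = #s) (hq₀ : ∀ x ∈ s, q.eval x = 0)
    (hpdeg : p.natDegree ≤ #s) (hp₀ : ∀ x ∈ s, p.eval x = 0) : p = C (p.coeff #s) * q := by
  set r := p - C (p.coeff #s) * q
  have hrdeg : r.natDegree ≤ #s :=
    (natDegree_sub_le _ _).trans (max_le hpdeg ((natDegree_C_mul_le _ _).trans hqdeg.le))
  have hrtop : r.coeff #s = 0 := by
    rw [coeff_sub, coeff_C_mul, ← hqdeg, hq.coeff_natDegree, mul_one, sub_self]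
  have hr₀ : ∀ x ∈ s, r.eval x = 0 := fun x hx => by
    rw [eval_sub, eval_mul, hp₀ x hx, hq₀ x hx, mul_zero, sub_zero]
  refine sub_eq_zero.1 (by_contra fun hr => hr ?_)
  refine eq_zero_of_natDegree_lt_card_of_eval_eq_zero' r s hr₀ (hrdeg.lt_of_ne fun h => hr ?_)
  rw [← leadingCoeff_eq_zero, leadingCoeff, h, hrtop]

theorem map_X_sq_sub_two_cos_mul_X_add_one (θ : ℝ) :
    (X ^ 2 - C (2 * Real.cos θ) * X + 1 : ℝ[X]).map (algebraMap ℝ ℂ) =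
      (X - C (Complex.exp (θ * Complex.I))) * (X - C (Complex.exp (-θ * Complex.I))) := by
  have hprod : Complex.exp (θ * Complex.I) * Complex.exp (-θ * Complex.I) = 1 := by
    rw [← Complex.exp_add, neg_mul, add_neg_cancel, Complex.exp_zero]
  have hsum : Complex.exp (θ * Complex.I) + Complex.exp (-θ * Complex.I) =
      ((2 * Real.cos θ : ℝ) : ℂ) := by
    rw [← Complex.two_cos, Complex.ofReal_mul, Complex.ofReal_cos, Complex.ofReal_ofNat]
  simp only [Polynomial.map_add, Polynomial.map_sub, Polynomial.map_mul, Polynomial.map_pow,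
    map_X, map_C, Polynomial.map_one, Complex.coe_algebraMap]
  rw [← C_1, ← hprod, ← hsum, C_add, C_mul]
  ring

end Polynomial

section Extremal

variable {M m : ℕ}

/-- The real form of `∏ (X - ω^l)` over the `2m` frequencies `M - m < |l| ≤ M`, with
`ω = dftRoot M`: the factor for `j` collects the conjugate roots `ω^j` and `ω^{-j}`. -/
noncomputable def extremalPoly (M m : ℕ) : ℝ[X] :=
  ∏ j ∈ Icc (M - m + 1) M, (X ^ 2 - C (2 * Real.cos (2 * π * j / (2 * M + 1))) * X + 1)

theorem monic_extremalPoly : (extremalPoly M m).Monic :=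
  monic_prod_of_monic _ _ fun _ _ => by monicity!

theorem natDegree_extremalPoly (hm : m ≤ M) : (extremalPoly M m).natDegree = 2 * m := by
  rw [extremalPoly, natDegree_prod_of_monic _ _ fun _ _ => by monicity!]
  have hdeg : ∀ j ∈ Icc (M - m + 1) M,
      (X ^ 2 - C (2 * Real.cos (2 * π * j / (2 * M + 1))) * X + 1 : ℝ[X]).natDegree = 2 :=
    fun _ _ => by compute_degree!
  rw [sum_congr rfl hdeg, sum_const, Nat.card_Icc, smul_eq_mul]
  omega

theorem reverse_extremalPoly : (extremalPoly M m).reverse = extremalPoly M m :=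
  reverse_prod_of_reverse_eq _ fun _ _ => reverse_X_sq_sub_C_mul_X_add_one _

theorem exp_mul_I_eq_dftRoot_zpow (j : ℤ) :
    Complex.exp (((2 * π * j / (2 * M + 1) : ℝ) : ℂ) * Complex.I) = dftRoot M ^ (-j) := by
  rw [dftRoot, ← Complex.exp_int_mul]
  push_cast
  ring_nf

theorem map_extremalPoly :
    (extremalPoly M m).map (algebraMap ℝ ℂ) =
      ∏ j ∈ Icc (M - m + 1) M,
        (X - C (dftRoot M ^ (-(j : ℤ)))) * (X - C (dftRoot M ^ (j : ℤ))) := by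
  rw [extremalPoly, Polynomial.map_prod]
  refine prod_congr rfl fun j _ => ?_
  rw [map_X_sq_sub_two_cos_mul_X_add_one, ← exp_mul_I_eq_dftRoot_zpow, ← neg_neg (j : ℤ),
    ← exp_mul_I_eq_dftRoot_zpow, neg_neg]
  push_cast
  ring_nf

theorem eval_map_extremalPoly_eq_zero_iff (hm : m ≤ M) {l : ℤ} (hl : |l| ≤ M) :
    ((extremalPoly M m).map (algebraMap ℝ ℂ)).eval (dftRoot M ^ l) = 0 ↔ (M - m : ℤ) < |l| := by
  simp only [map_extremalPoly, eval_prod, prod_eq_zero_iff, mem_Icc, eval_mul, eval_sub, eval_X,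
    eval_C, mul_eq_zero, sub_eq_zero]
  constructor
  · rintro ⟨j, hj, hroot | hroot⟩
    · have := dftRoot_zpow_injective hl (by rw [abs_neg]; simp only [Nat.abs_cast]; omega) hroot
      cases abs_cases l <;> omega
    · have := dftRoot_zpow_injective hl (by simp only [Nat.abs_cast]; omega) hroot
      cases abs_cases l <;> omega
  · intro hlt
    refine ⟨l.natAbs, by cases abs_cases l <;> omega, ?_⟩
    cases abs_cases l
    · right; congr 1; omega
    · left; congr 1; omega

theorem card_filter_lt_abs (hm : m ≤ M) :
    #{l ∈ Icc (-(M : ℤ)) M | (M - m : ℤ) < |l|} = 2 * m := by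
  have hsplit : {l ∈ Icc (-(M : ℤ)) M | (M - m : ℤ) < |l|} =
      Icc (-(M : ℤ)) (m - M - 1) ∪ Icc ((M : ℤ) - m + 1) M := by
    ext l
    simp only [mem_filter, mem_Icc, mem_union]
    cases abs_cases l <;> omega
  rw [hsplit, card_union_of_disjoint (disjoint_left.2 fun l h h' => by
    rw [mem_Icc] at h h'; omega), Int.card_Icc, Int.card_Icc]
  omega

theorem centeredPoly_eq_C_mul_map_extremalPoly (hm : m ≤ M) {u : ℤ → ℂ}
    (hu : ∀ k ∈ Iset (2 * M + 1), (m : ℤ) < |k| → u k = 0)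
    (hdft : ∀ l ∈ Iset (2 * M + 1), ((M - m : ℕ) : ℤ) < |l| → dft (2 * M + 1) u l = 0) :
    centeredPoly m u = C (u m) * (extremalPoly M m).map (algebraMap ℝ ℂ) := by
  set T := {l ∈ Icc (-(M : ℤ)) M | (M - m : ℤ) < |l|}
  have hT : ∀ l ∈ T, |l| ≤ M ∧ (M - m : ℤ) < |l| := fun l hl => by
    rw [mem_filter, mem_Icc, ← abs_le] at hl
    exact hl
  have hcard : #(T.image (dftRoot M ^ ·)) = 2 * m := by
    rw [card_image_of_injOn fun l hl l' hl' => dftRoot_zpow_injective (hT l hl).1 (hT l' hl').1,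
      card_filter_lt_abs hm]
  have htop : (centeredPoly m u).coeff (2 * m) = u m := by
    simpa [show ((m : ℤ) + m).toNat = 2 * m by omega]
      using coeff_centeredPoly (m := m) u (k := m) (by simp)
  rw [← htop, ← hcard]
  refine eq_C_mul_of_eval_eq_zero (monic_extremalPoly.map _) ?_ ?_ ?_ ?_
  · rw [natDegree_map, natDegree_extremalPoly hm, hcard]
  · simp only [mem_image]
    rintro _ ⟨l, hl, rfl⟩
    exact (eval_map_extremalPoly_eq_zero_iff hm (hT l hl).1).2 (hT l hl).2
  · rw [hcard]
    exact natDegree_centeredPoly_le m u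
  · simp only [mem_image]
    rintro _ ⟨l, hl, rfl⟩
    refine (dft_eq_zero_iff_eval_centeredPoly hm hu l).1 (hdft l ?_ ?_)
    · exact mem_Iset_two_mul_add_one.2 (hT l hl).1
    · have := (hT l hl).2
      omega

end Extremal

section ExtremalVector

variable {M m : ℕ}

noncomputable def extremalVec (M m : ℕ) (k : ℤ) : ℝ :=
  if |k| ≤ m then (extremalPoly M m).coeff (k + m).toNat else 0

theorem extremalVec_eq_zero {k : ℤ} (hk : (m : ℤ) < |k|) : extremalVec M m k = 0 :=
  if_neg hk.not_ge

theorem extremalVec_neg (hm : m ≤ M) (k : ℤ) : extremalVec M m (-k) = extremalVec M m k := by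
  rw [extremalVec, extremalVec, abs_neg]
  split_ifs with hk
  · have hk' := abs_le.1 hk
    rw [coeff_eq_coeff_natDegree_sub_of_reverse_eq reverse_extremalPoly
      (by rw [natDegree_extremalPoly hm]; omega), natDegree_extremalPoly hm]
    congr 1
    omega
  · rfl

theorem extremalVec_self (hm : m ≤ M) : extremalVec M m m = 1 := by
  rw [extremalVec, if_pos (by simp),
    show ((m : ℤ) + m).toNat = (extremalPoly M m).natDegree by
      rw [natDegree_extremalPoly hm]; omega]
  exact monic_extremalPoly

theorem centeredPoly_extremalVec (hm : m ≤ M) :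
    centeredPoly m (fun k => (extremalVec M m k : ℂ)) =
      (extremalPoly M m).map (algebraMap ℝ ℂ) := by
  ext j
  rw [coeff_map]
  rcases le_or_gt j (2 * m) with hj | hj
  · have habs : |(j : ℤ) - m| ≤ m := abs_le.2 ⟨by omega, by omega⟩
    have hcoeff := coeff_centeredPoly (fun k => (extremalVec M m k : ℂ)) habs
    rw [show ((j : ℤ) - m + m).toNat = j by omega] at hcoeff
    rw [hcoeff, extremalVec, if_pos habs, show ((j : ℤ) - m + m).toNat = j by omega]
    rfl
  · rw [coeff_eq_zero_of_natDegree_lt ((natDegree_centeredPoly_le _ _).trans_lt hj),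
      coeff_eq_zero_of_natDegree_lt (by rwa [natDegree_extremalPoly hm]), map_zero]

theorem dft_extremalVec_eq_zero_iff (hm : m ≤ M) {l : ℤ} (hl : |l| ≤ M) :
    dft (2 * M + 1) (fun k => (extremalVec M m k : ℂ)) l = 0 ↔ (M - m : ℤ) < |l| := by
  rw [dft_eq_zero_iff_eval_centeredPoly hm (fun k _ hk => by simp [extremalVec_eq_zero hk]) l,
    centeredPoly_extremalVec hm, eval_map_extremalPoly_eq_zero_iff hm hl]

theorem len_extremalVec (hm : m ≤ M) :
    len (2 * M + 1) (fun k => (extremalVec M m k : ℂ)) = 2 * m + 1 := by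
  have hself : (extremalVec M m m : ℂ) ≠ 0 := by simp [extremalVec_self hm]
  refine len_eq_of_vanishing (fun k _ hk => by simp [extremalVec_eq_zero hk]) ?_ ?_
  · exact mem_supp.2 ⟨mem_Iset_two_mul_add_one.2 (by simpa), hself⟩
  · exact mem_supp.2 ⟨mem_Iset_two_mul_add_one.2 (by simpa), by rwa [extremalVec_neg hm]⟩

theorem len_dft_extremalVec (hm : m ≤ M) :
    len (2 * M + 1) (dft (2 * M + 1) (fun k => (extremalVec M m k : ℂ))) = 2 * (M - m) + 1 := by
  have hmem : ∀ l : ℤ, |l| = (M - m : ℕ) → l ∈ supp (2 * M + 1) _ := fun l hl =>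
    mem_supp.2 ⟨mem_Iset_two_mul_add_one.2 (by omega), fun h =>
      absurd ((dft_extremalVec_eq_zero_iff hm (by omega)).1 h) (by omega)⟩
  refine len_eq_of_vanishing (fun l hl hlt => ?_) (hmem _ (by simp)) (hmem _ (by simp))
  exact (dft_extremalVec_eq_zero_iff hm (mem_Iset_two_mul_add_one.1 hl)).2 (by omega)

theorem eq_mul_extremalVec (hm : m ≤ M) {a : ℤ → ℝ} (heven : IsEvenVec (2 * M + 1) a)
    (hlen : len (2 * M + 1) (fun k => (a k : ℂ)) ≤ 2 * m + 1)
    (hlen' : len (2 * M + 1) (dft (2 * M + 1) (fun k => (a k : ℂ))) ≤ 2 * (M - m) + 1) :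
    ∀ k ∈ Iset (2 * M + 1), a k = a m * extremalVec M m k := by
  have heven' : ∀ k ∈ Iset (2 * M + 1), (fun k => (a k : ℂ)) (-k) = a k := fun k hk =>
    congrArg _ (heven k hk)
  have hu := vanishing_of_len_le heven' hlen
  have hpoly := centeredPoly_eq_C_mul_map_extremalPoly hm hu
    (vanishing_of_len_le (fun l _ => dft_neg_of_even heven' l) hlen')
  rw [← centeredPoly_extremalVec hm] at hpoly
  intro k hk
  rcases le_or_gt |k| m with hkm | hkm
  · have hcoeff := congrArg (coeff · (k + m).toNat) hpoly
    simp only [coeff_C_mul, coeff_centeredPoly _ hkm] at hcoeff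
    exact_mod_cast hcoeff
  · rw [extremalVec_eq_zero hkm, mul_zero]
    exact_mod_cast hu k hk hkm

end ExtremalVector

theorem stmt6_general (M : ℕ) (m : ℕ) (hm2 : m ≤ M - 1) :
    ∃ a : ℤ → ℝ, (∃ k ∈ Iset (2 * M + 1), a k ≠ 0) ∧ IsEvenVec (2 * M + 1) a ∧
      len (2 * M + 1) (fun k => (a k : ℂ)) = 2 * m + 1 ∧
      len (2 * M + 1) (dft (2 * M + 1) (fun k => (a k : ℂ))) = 2 * M - 2 * m + 1 ∧
      ∀ a' : ℤ → ℝ, (∃ k ∈ Iset (2 * M + 1), a' k ≠ 0) → IsEvenVec (2 * M + 1) a' →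
        len (2 * M + 1) (fun k => (a' k : ℂ)) = 2 * m + 1 →
        len (2 * M + 1) (dft (2 * M + 1) (fun k => (a' k : ℂ))) = 2 * M - 2 * m + 1 →
        ∃ c : ℝ, c ≠ 0 ∧ ∀ k ∈ Iset (2 * M + 1), a' k = c * a k := by
  have hm : m ≤ M := hm2.trans (Nat.sub_le M 1)
  refine ⟨extremalVec M m,
    ⟨m, mem_Iset_two_mul_add_one.2 (by simpa), by simp [extremalVec_self hm]⟩,
    fun k _ => extremalVec_neg hm k, len_extremalVec hm,
    by rw [len_dft_extremalVec hm]; omega, ?_⟩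
  rintro a' ⟨k₀, hk₀, hne⟩ heven hlen hlen'
  have hmul := eq_mul_extremalVec hm heven hlen.le (by omega)
  exact ⟨a' m, fun h => hne (by rw [hmul k₀ hk₀, h, zero_mul]), hmul⟩

theorem stmt6 (M : ℕ) (hM : 1 ≤ M) (m : ℕ) (hm1 : 1 ≤ m) (hm2 : m ≤ M - 1) :
    ∃ a : ℤ → ℝ, (∃ k ∈ Iset (2 * M + 1), a k ≠ 0) ∧ IsEvenVec (2 * M + 1) a ∧
      len (2 * M + 1) (fun k => (a k : ℂ)) = 2 * m + 1 ∧
      len (2 * M + 1) (dft (2 * M + 1) (fun k => (a k : ℂ))) = 2 * M - 2 * m + 1 ∧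
      ∀ a' : ℤ → ℝ, (∃ k ∈ Iset (2 * M + 1), a' k ≠ 0) → IsEvenVec (2 * M + 1) a' →
        len (2 * M + 1) (fun k => (a' k : ℂ)) = 2 * m + 1 →
        len (2 * M + 1) (dft (2 * M + 1) (fun k => (a' k : ℂ))) = 2 * M - 2 * m + 1 →
        ∃ c : ℝ, c ≠ 0 ∧ ∀ k ∈ Iset (2 * M + 1), a' k = c * a k :=
  stmt6_general M m hm2
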